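/- Let L ∈ A⁺, L̄ ∈ A⁻ and let p ≥ 2 be an integer. Then P₁(L,L̄)(L^p, 0) = P₂(L,L̄)(L^{p−1}, 0) = P₃(L,L̄)(L^{p−2}, 0) = ([(L^p)₊, L], [(L^p)₊, L̄]), and likewise P₁(L,L̄)(0, L̄^p) = P₂(L,L̄)(0, L̄^{p−1}) = P₃(L,L̄)(0, L̄^{p−2}) = ([(L̄^p)₋, L], [(L̄^p)₋, L̄]). In particular the two-dimensional Toda lattice flows ∂L/∂t_p = [(L^p)₊, L], ∂L̄/∂t_p = [(L^p)₊, L̄] and ∂L/∂t̄_p = [(L̄^p)₋, L], ∂L̄/∂t̄_p = [(L̄^p)₋, L̄] admit a tri-Hamiltonian representation with respect to P₁, P₂, P₃. -/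
import Mathlib


noncomputable section

/-- Formal difference operators `X = ∑ₖ aₖ Λᵏ`, encoded by their coefficient functions:
`X k n` is the value `aₖ(n)` of the coefficient of `Λᵏ`. -/
abbrev DOp : Type := ℤ → ℤ → ℂ

/-- Product of difference operators, determined by `Λᵏ a = (a ∘ (·+k)) Λᵏ`:
the coefficient of `Λᵐ` in `X*Y` at `n` is `∑_{k+l=m} aₖ(n) bₗ(n+k)`. -/
def dmul (X Y : DOp) : DOp := fun m n => ∑ᶠ k : ℤ, X k n * Y (m - k) (n + k)

/-- Commutator `[X,Y] = XY - YX`. -/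
def dcomm (X Y : DOp) : DOp := dmul X Y - dmul Y X

/-- Truncation `X_{≥K}`. -/
def truncGe (K : ℤ) (X : DOp) : DOp := fun k n => if K ≤ k then X k n else 0
/-- Truncation `X_{≤K}`. -/
def truncLe (K : ℤ) (X : DOp) : DOp := fun k n => if k ≤ K then X k n else 0
/-- Truncation `X_{>K}`. -/
def truncGt (K : ℤ) (X : DOp) : DOp := fun k n => if K < k then X k n else 0
/-- Truncation `X_{<K}`. -/
def truncLt (K : ℤ) (X : DOp) : DOp := fun k n => if k < K then X k n else 0

/-- `X₊ := X_{≥0}`. -/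
def dpos (X : DOp) : DOp := truncGe 0 X

/-- `X₋ := X_{<0}`. -/
def dneg (X : DOp) : DOp := truncLt 0 X

/-- The shift operator `Λ`. -/
def dlam : DOp := fun k _ => if k = 1 then 1 else 0

/-- The identity operator. -/
def done : DOp := fun k _ => if k = 0 then 1 else 0

/-- Powers of a difference operator. -/
def dpow (X : DOp) : ℕ → DOp
  | 0 => done
  | n + 1 => dmul (dpow X n) X

/-- The residue: coefficient of `Λ⁰`. -/
def dres (X : DOp) : ℤ → ℂ := X 0

/-- The trace: `tr X = ∑ₙ a₀(n)`. -/
def dtr (X : DOp) : ℂ := ∑ᶠ n : ℤ, X 0 n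

/-- `A⁺`: coefficients vanish in all sufficiently high degrees. -/
def IsUpper (X : DOp) : Prop := ∃ K : ℤ, ∀ k : ℤ, K < k → X k = 0

/-- `A⁻`: coefficients vanish in all sufficiently low degrees. -/
def IsLower (X : DOp) : Prop := ∃ K : ℤ, ∀ k : ℤ, k < K → X k = 0

/-- `A⁰`: only finitely many nonzero coefficient functions. -/
def IsBdd (X : DOp) : Prop := {k : ℤ | X k ≠ 0}.Finite

/-- All coefficient functions finitely supported (finite total support). -/
def FinSuppOp (X : DOp) : Prop := (Function.support fun pr : ℤ × ℤ => X pr.1 pr.2).Finite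

/-- Membership in `𝔄 = A⁺ ⊕ A⁻`. -/
def InA (x : DOp × DOp) : Prop := IsUpper x.1 ∧ IsLower x.2

/-- Componentwise commutator on `𝔄`. -/
def pcomm (x y : DOp × DOp) : DOp × DOp := (dcomm x.1 y.1, dcomm x.2 y.2)

/-- Trace pairing `⟨(X,X̄),(Y,Ȳ)⟩ = tr(XY) + tr(X̄Ȳ)` on `𝔄`. -/
def ip (x y : DOp × DOp) : ℂ := dtr (dmul x.1 y.1) + dtr (dmul x.2 y.2)

/-- The first Poisson tensor `P₁` on `𝔄`, at the point `Lp = (L, L̄)`,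
evaluated on the covector `x = (X, X̄)`. -/
def P1T (Lp x : DOp × DOp) : DOp × DOp :=
  (dcomm Lp.1 (dneg x.1 - dneg x.2)
      - truncLe 0 (dcomm Lp.1 x.1 + dcomm Lp.2 x.2),
   dcomm Lp.2 (dpos x.2 - dpos x.1)
      - truncGt 0 (dcomm Lp.1 x.1 + dcomm Lp.2 x.2))

/-- The second Poisson tensor `P₂` on `𝔄`. -/
def P2T (Lp x : DOp × DOp) : DOp × DOp :=
  ((1 / 2 : ℂ) •
      (dcomm Lp.1 (dneg (dmul Lp.1 x.1 + dmul x.1 Lp.1)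
            - dneg (dmul Lp.2 x.2 + dmul x.2 Lp.2))
        - dmul Lp.1 (truncLe 0 (dcomm Lp.1 x.1 + dcomm Lp.2 x.2))
        - dmul (truncLe 0 (dcomm Lp.1 x.1 + dcomm Lp.2 x.2)) Lp.1),
   (1 / 2 : ℂ) •
      (dcomm Lp.2 (dpos (dmul Lp.2 x.2 + dmul x.2 Lp.2)
            - dpos (dmul Lp.1 x.1 + dmul x.1 Lp.1))
        - dmul Lp.2 (truncGt 0 (dcomm Lp.1 x.1 + dcomm Lp.2 x.2))
        - dmul (truncGt 0 (dcomm Lp.1 x.1 + dcomm Lp.2 x.2)) Lp.2))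

/-- The third Poisson tensor `P₃` on `𝔄`. -/
def P3T (Lp x : DOp × DOp) : DOp × DOp :=
  (dcomm Lp.1 (dneg (dmul (dmul Lp.1 x.1) Lp.1 - dmul (dmul Lp.2 x.2) Lp.2))
      - dmul (dmul Lp.1 (truncLe 0 (dcomm Lp.1 x.1 + dcomm Lp.2 x.2))) Lp.1,
   dcomm Lp.2 (dpos (dmul (dmul Lp.2 x.2) Lp.2 - dmul (dmul Lp.1 x.1) Lp.1))
      - dmul (dmul Lp.2 (truncGt 0 (dcomm Lp.1 x.1 + dcomm Lp.2 x.2))) Lp.2)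

/-! ### Auxiliary lemmas -/

open Function

section Aux

variable {X Y Z : DOp}

/-- Pointwise finiteness of the convolution supports. -/
def FinPair (X Y : DOp) : Prop :=
  ∀ m n : ℤ, (Function.support fun k => X k n * Y (m - k) (n + k)).Finite

lemma apply_eq_zero {X : DOp} {k : ℤ} (h : X k = 0) (n : ℤ) : X k n = 0 := by
  rw [h]; rfl

lemma finPair_upper (hX : IsUpper X) (hY : IsUpper Y) : FinPair X Y := by
  obtain ⟨KX, hX⟩ := hX
  obtain ⟨KY, hY⟩ := hY
  intro m n
  apply Set.Finite.subset (Set.finite_Icc (m - KY) KX)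
  intro k hk
  simp only [Function.mem_support] at hk
  simp only [Set.mem_Icc]
  constructor
  · by_contra hc
    exact hk (by rw [apply_eq_zero (hY (m - k) (by omega)) (n + k), mul_zero])
  · by_contra hc
    exact hk (by rw [apply_eq_zero (hX k (by omega)) n, zero_mul])

lemma finPair_lower (hX : IsLower X) (hY : IsLower Y) : FinPair X Y := by
  obtain ⟨KX, hX⟩ := hX
  obtain ⟨KY, hY⟩ := hY
  intro m n
  apply Set.Finite.subset (Set.finite_Icc KX (m - KY))
  intro k hk
  simp only [Function.mem_support] at hk
  simp only [Set.mem_Icc]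
  constructor
  · by_contra hc
    exact hk (by rw [apply_eq_zero (hX k (by omega)) n, zero_mul])
  · by_contra hc
    exact hk (by rw [apply_eq_zero (hY (m - k) (by omega)) (n + k), mul_zero])

lemma finPair_bdd_left (hX : IsBdd X) (Y : DOp) : FinPair X Y := by
  intro m n
  apply Set.Finite.subset hX
  intro k hk
  simp only [Function.mem_support] at hk
  simp only [Set.mem_setOf_eq]
  intro h
  exact hk (by rw [apply_eq_zero h n, zero_mul])

lemma finPair_bdd_right (X : DOp) (hY : IsBdd Y) : FinPair X Y := by
  intro m n
  apply Set.Finite.subset (Set.Finite.image (fun l => m - l) hY)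
  intro k hk
  simp only [Function.mem_support] at hk
  refine ⟨m - k, ?_, by dsimp only; omega⟩
  simp only [Set.mem_setOf_eq]
  intro h
  exact hk (by rw [apply_eq_zero h (n + k), mul_zero])

lemma isBdd_dpos (hX : IsUpper X) : IsBdd (dpos X) := by
  obtain ⟨K, hK⟩ := hX
  apply Set.Finite.subset (Set.finite_Icc 0 K)
  intro k hk
  simp only [Set.mem_setOf_eq] at hk
  simp only [Set.mem_Icc]
  constructor
  · by_contra hc
    exact hk (funext fun n => by simp only [dpos, truncGe, Pi.zero_apply]; rw [if_neg (by omega)])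
  · by_contra hc
    exact hk (funext fun n => by
      simp only [dpos, truncGe]
      rw [apply_eq_zero (hK k (by omega)) n]
      simp)

lemma isBdd_dneg (hX : IsLower X) : IsBdd (dneg X) := by
  obtain ⟨K, hK⟩ := hX
  apply Set.Finite.subset (Set.finite_Icc K 0)
  intro k hk
  simp only [Set.mem_setOf_eq] at hk
  simp only [Set.mem_Icc]
  constructor
  · by_contra hc
    exact hk (funext fun n => by
      simp only [dneg, truncLt]
      rw [apply_eq_zero (hK k (by omega)) n]
      simp)
  · by_contra hc
    exact hk (funext fun n => by simp only [dneg, truncLt, Pi.zero_apply]; rw [if_neg (by omega)])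

lemma isUpper_dneg (X : DOp) : IsUpper (dneg X) :=
  ⟨-1, fun k hk => funext fun n => by
    simp only [dneg, truncLt, Pi.zero_apply]; rw [if_neg (by omega)]⟩

lemma isLower_dpos (X : DOp) : IsLower (dpos X) :=
  ⟨0, fun k hk => funext fun n => by
    simp only [dpos, truncGe, Pi.zero_apply]; rw [if_neg (by omega)]⟩

lemma isUpper_dmul (hX : IsUpper X) (hY : IsUpper Y) : IsUpper (dmul X Y) := by
  obtain ⟨KX, hX⟩ := hX
  obtain ⟨KY, hY⟩ := hY
  refine ⟨KX + KY, fun k hk => funext fun n => ?_⟩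
  apply finsum_eq_zero_of_forall_eq_zero
  intro j
  rcases le_or_gt j KX with h | h
  · rw [apply_eq_zero (hY (k - j) (by omega)) (n + j), mul_zero]
  · rw [apply_eq_zero (hX j h) n, zero_mul]

lemma isLower_dmul (hX : IsLower X) (hY : IsLower Y) : IsLower (dmul X Y) := by
  obtain ⟨KX, hX⟩ := hX
  obtain ⟨KY, hY⟩ := hY
  refine ⟨KX + KY, fun k hk => funext fun n => ?_⟩
  apply finsum_eq_zero_of_forall_eq_zero
  intro j
  rcases le_or_gt KX j with h | h
  · rw [apply_eq_zero (hY (k - j) (by omega)) (n + j), mul_zero]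
  · rw [apply_eq_zero (hX j h) n, zero_mul]

lemma isUpper_done : IsUpper done :=
  ⟨0, fun k hk => funext fun n => by
    simp only [done, Pi.zero_apply]; rw [if_neg (by omega)]⟩

lemma isLower_done : IsLower done :=
  ⟨0, fun k hk => funext fun n => by
    simp only [done, Pi.zero_apply]; rw [if_neg (by omega)]⟩

lemma isUpper_dpow (hX : IsUpper X) (n : ℕ) : IsUpper (dpow X n) := by
  induction n with
  | zero => exact isUpper_done
  | succ n ih => exact isUpper_dmul ih hX

lemma isLower_dpow (hX : IsLower X) (n : ℕ) : IsLower (dpow X n) := by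
  induction n with
  | zero => exact isLower_done
  | succ n ih => exact isLower_dmul ih hX

/-! ### Zero and linearity lemmas for `dmul` -/

lemma dmul_zero (X : DOp) : dmul X 0 = 0 := by
  funext m n
  simp [dmul]

lemma zero_dmul (X : DOp) : dmul 0 X = 0 := by
  funext m n
  simp [dmul]

lemma dcomm_zero (X : DOp) : dcomm X 0 = 0 := by
  simp [dcomm, dmul_zero, zero_dmul]

lemma zero_dcomm (X : DOp) : dcomm 0 X = 0 := by
  simp [dcomm, dmul_zero, zero_dmul]

lemma dmul_neg (X Y : DOp) : dmul X (-Y) = -dmul X Y := by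
  funext m n
  simp only [dmul, Pi.neg_apply, mul_neg]
  exact finsum_neg_distrib _

lemma neg_dmul (X Y : DOp) : dmul (-X) Y = -dmul X Y := by
  funext m n
  simp only [dmul, Pi.neg_apply, neg_mul]
  exact finsum_neg_distrib _

lemma dcomm_neg (X Y : DOp) : dcomm X (-Y) = -dcomm X Y := by
  simp only [dcomm, dmul_neg, neg_dmul]
  abel

lemma dcomm_antisymm (X Y : DOp) : dcomm X Y = -dcomm Y X := by
  simp only [dcomm]; abel

lemma dmul_add (h1 : FinPair X Y) (h2 : FinPair X Z) :
    dmul X (Y + Z) = dmul X Y + dmul X Z := by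
  funext m n
  simp only [dmul, Pi.add_apply, mul_add]
  exact finsum_add_distrib (h1 m n) (h2 m n)

lemma add_dmul (h1 : FinPair X Z) (h2 : FinPair Y Z) :
    dmul (X + Y) Z = dmul X Z + dmul Y Z := by
  funext m n
  simp only [dmul, Pi.add_apply, add_mul]
  exact finsum_add_distrib (h1 m n) (h2 m n)

lemma dmul_sub (h1 : FinPair X Y) (h2 : FinPair X Z) :
    dmul X (Y - Z) = dmul X Y - dmul X Z := by
  funext m n
  simp only [dmul, Pi.sub_apply, mul_sub]
  exact finsum_sub_distrib (h1 m n) (h2 m n)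

lemma sub_dmul (h1 : FinPair X Z) (h2 : FinPair Y Z) :
    dmul (X - Y) Z = dmul X Z - dmul Y Z := by
  funext m n
  simp only [dmul, Pi.sub_apply, sub_mul]
  exact finsum_sub_distrib (h1 m n) (h2 m n)

lemma dcomm_add (h1 : FinPair X Y) (h2 : FinPair X Z) (h3 : FinPair Y X) (h4 : FinPair Z X) :
    dcomm X (Y + Z) = dcomm X Y + dcomm X Z := by
  simp only [dcomm, dmul_add h1 h2, add_dmul h3 h4]
  abel

/-! ### Truncation lemmas -/

lemma truncLe_zero : truncLe 0 (0 : DOp) = 0 := by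
  funext k n; simp [truncLe]

lemma truncGt_zero : truncGt 0 (0 : DOp) = 0 := by
  funext k n; simp [truncGt]

lemma dneg_zero : dneg (0 : DOp) = 0 := by
  funext k n; simp [dneg, truncLt]

lemma dpos_zero : dpos (0 : DOp) = 0 := by
  funext k n; simp [dpos, truncGe]

lemma dneg_add (X Y : DOp) : dneg (X + Y) = dneg X + dneg Y := by
  funext k n
  simp only [dneg, truncLt, Pi.add_apply]
  split <;> simp

lemma dpos_add (X Y : DOp) : dpos (X + Y) = dpos X + dpos Y := by
  funext k n
  simp only [dpos, truncGe, Pi.add_apply]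
  split <;> simp

lemma dneg_neg (X : DOp) : dneg (-X) = -dneg X := by
  funext k n
  simp only [dneg, truncLt, Pi.neg_apply]
  split <;> simp

lemma dpos_neg (X : DOp) : dpos (-X) = -dpos X := by
  funext k n
  simp only [dpos, truncGe, Pi.neg_apply]
  split <;> simp

lemma dneg_eq_sub (X : DOp) : dneg X = X - dpos X := by
  funext k n
  simp only [dneg, dpos, truncLt, truncGe, Pi.sub_apply]
  rcases lt_or_ge k 0 with h | h
  · rw [if_pos h, if_neg (by omega), sub_zero]
  · rw [if_neg (by omega), if_pos h, sub_self]

lemma dpos_eq_sub (X : DOp) : dpos X = X - dneg X := by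
  funext k n
  simp only [dneg, dpos, truncLt, truncGe, Pi.sub_apply]
  rcases lt_or_ge k 0 with h | h
  · rw [if_neg (by omega), if_pos h, sub_self]
  · rw [if_pos h, if_neg (by omega), sub_zero]

/-! ### Identity and associativity -/

lemma dmul_done (X : DOp) : dmul X done = X := by
  funext m n
  simp only [dmul, done]
  rw [finsum_eq_single _ m (fun j hj => by rw [if_neg (by omega), mul_zero])]
  rw [if_pos (by omega), mul_one]

lemma done_dmul (X : DOp) : dmul done X = X := by
  funext m n
  simp only [dmul, done]
  rw [finsum_eq_single _ 0 (fun j hj => by rw [if_neg hj, zero_mul])]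
  simp

lemma dmul_assoc_upper (hX : IsUpper X) (hY : IsUpper Y) (hZ : IsUpper Z) :
    dmul (dmul X Y) Z = dmul X (dmul Y Z) := by
  obtain ⟨KX, hX⟩ := hX
  obtain ⟨KY, hY⟩ := hY
  obtain ⟨KZ, hZ⟩ := hZ
  funext m n
  set A : ℤ := max 0 (max KX (max KY KZ)) with hA
  have hA0 : 0 ≤ A := le_max_left _ _
  have hAX : KX ≤ A := by simp [hA]
  have hAY : KY ≤ A := by simp [hA]
  have hAZ : KZ ≤ A := by simp [hA]
  have hXz : ∀ k : ℤ, A < k → ∀ n', X k n' = 0 :=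
    fun k hk n' => apply_eq_zero (hX k (by omega)) n'
  have hYz : ∀ k : ℤ, A < k → ∀ n', Y k n' = 0 :=
    fun k hk n' => apply_eq_zero (hY k (by omega)) n'
  have hZz : ∀ k : ℤ, A < k → ∀ n', Z k n' = 0 :=
    fun k hk n' => apply_eq_zero (hZ k (by omega)) n'
  have hXY : ∀ (j n' : ℤ), 2 * A < j → dmul X Y j n' = 0 := by
    intro j n' hj
    apply finsum_eq_zero_of_forall_eq_zero
    intro k
    rcases le_or_gt k A with h | h
    · rw [hYz (j - k) (by omega), mul_zero]
    · rw [hXz k h, zero_mul]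
  have hYZ : ∀ (j n' : ℤ), 2 * A < j → dmul Y Z j n' = 0 := by
    intro j n' hj
    apply finsum_eq_zero_of_forall_eq_zero
    intro k
    rcases le_or_gt k A with h | h
    · rw [hZz (j - k) (by omega), mul_zero]
    · rw [hYz k h, zero_mul]
  set I : Finset ℤ := Finset.Icc (m - 2 * A) (2 * A) with hI
  show (∑ᶠ j, dmul X Y j n * Z (m - j) (n + j)) = ∑ᶠ k, X k n * dmul Y Z (m - k) (n + k)
  rw [finsum_eq_sum_of_support_subset _ (s := I) (by
    intro j hj
    simp only [Function.mem_support] at hj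
    simp only [hI, Finset.coe_Icc, Set.mem_Icc]
    constructor
    · by_contra hc
      exact hj (by rw [hZz (m - j) (by omega), mul_zero])
    · by_contra hc
      exact hj (by rw [hXY j n (by omega), zero_mul]))]
  rw [finsum_eq_sum_of_support_subset _ (s := I) (by
    intro k hk
    simp only [Function.mem_support] at hk
    simp only [hI, Finset.coe_Icc, Set.mem_Icc]
    constructor
    · by_contra hc
      exact hk (by rw [hYZ (m - k) (n + k) (by omega), mul_zero])
    · by_contra hc
      exact hk (by rw [hXz k (by omega), zero_mul]))]
  have lhs_eq : ∀ j ∈ I, dmul X Y j n * Z (m - j) (n + j)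
      = ∑ k ∈ I, (X k n * Y (j - k) (n + k)) * Z (m - j) (n + j) := by
    intro j hj
    rcases eq_or_ne (Z (m - j) (n + j)) 0 with hz | hz
    · rw [hz, mul_zero]
      apply (Finset.sum_eq_zero ?_).symm
      intro k _
      simp [hz]
    · have hjA : m - A ≤ j := by
        by_contra hc
        exact hz (hZz (m - j) (by omega) (n + j))
      rw [show dmul X Y j n = ∑ k ∈ I, X k n * Y (j - k) (n + k) from ?_,
        Finset.sum_mul]
      rw [show dmul X Y j n = ∑ᶠ k, X k n * Y (j - k) (n + k) from rfl]
      apply finsum_eq_sum_of_support_subset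
      intro k hk
      simp only [Function.mem_support] at hk
      simp only [hI, Finset.coe_Icc, Set.mem_Icc]
      constructor
      · by_contra hc
        exact hk (by rw [hYz (j - k) (by omega), mul_zero])
      · by_contra hc
        exact hk (by rw [hXz k (by omega), zero_mul])
  rw [Finset.sum_congr rfl lhs_eq, Finset.sum_comm]
  apply Finset.sum_congr rfl
  intro k hk
  rcases eq_or_ne (X k n) 0 with hx | hx
  · rw [hx, zero_mul]
    apply Finset.sum_eq_zero
    intro j _
    simp
  · have hkA : k ≤ A := by
      by_contra hc
      exact hx (hXz k (by omega) n)
    have : ∀ j ∈ I, (X k n * Y (j - k) (n + k)) * Z (m - j) (n + j)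
        = X k n * (Y (j - k) (n + k) * Z (m - j) (n + j)) := fun j _ => mul_assoc _ _ _
    rw [Finset.sum_congr rfl this, ← Finset.mul_sum]
    congr 1
    rw [show dmul Y Z (m - k) (n + k) = ∑ᶠ l, Y l (n + k) * Z (m - k - l) (n + k + l) from rfl]
    rw [← finsum_comp_equiv (Equiv.subRight k)]
    have : ∀ j : ℤ, Y (Equiv.subRight k j) (n + k) * Z (m - k - Equiv.subRight k j)
        (n + k + Equiv.subRight k j) = Y (j - k) (n + k) * Z (m - j) (n + j) := by
      intro j
      simp only [Equiv.subRight_apply]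
      rw [show m - k - (j - k) = m - j by ring, show n + k + (j - k) = n + j by ring]
    rw [finsum_congr this]
    symm
    apply finsum_eq_sum_of_support_subset
    intro j hj
    simp only [Function.mem_support] at hj
    simp only [hI, Finset.coe_Icc, Set.mem_Icc]
    constructor
    · by_contra hc
      exact hj (by rw [hZz (m - j) (by omega), mul_zero])
    · by_contra hc
      exact hj (by rw [hYz (j - k) (by omega), zero_mul])

/-! ### The flip anti-automorphism -/

def dflip (X : DOp) : DOp := fun k n => X (-k) (n + k)

lemma dflip_dflip (X : DOp) : dflip (dflip X) = X := by
  funext k n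
  simp only [dflip, neg_neg]
  rw [show n + k + -k = n by ring]

lemma dflip_inj (h : dflip X = dflip Y) : X = Y := by
  rw [← dflip_dflip X, h, dflip_dflip]

lemma isUpper_dflip (hX : IsLower X) : IsUpper (dflip X) := by
  obtain ⟨K, hK⟩ := hX
  refine ⟨-K + 1, fun k hk => funext fun n => ?_⟩
  simp only [dflip]
  exact apply_eq_zero (hK (-k) (by omega)) (n + k)

lemma dflip_dmul (X Y : DOp) : dflip (dmul X Y) = dmul (dflip Y) (dflip X) := by
  funext m n
  show (∑ᶠ j, X j (n + m) * Y (-m - j) (n + m + j))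
      = ∑ᶠ k, dflip Y k n * dflip X (m - k) (n + k)
  rw [← finsum_comp_equiv (Equiv.subRight m)]
  apply finsum_congr
  intro k
  simp only [Equiv.subRight_apply, dflip]
  rw [show -m - (k - m) = -k by ring, show n + m + (k - m) = n + k by ring,
    show -(m - k) = k - m by ring, show n + k + (m - k) = n + m by ring]
  ring

lemma dmul_assoc_lower (hX : IsLower X) (hY : IsLower Y) (hZ : IsLower Z) :
    dmul (dmul X Y) Z = dmul X (dmul Y Z) := by
  apply dflip_inj
  rw [dflip_dmul, dflip_dmul, dflip_dmul, dflip_dmul,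
    dmul_assoc_upper (isUpper_dflip hZ) (isUpper_dflip hY) (isUpper_dflip hX)]

/-! ### Powers -/

lemma dpow_comm_upper (hL : IsUpper X) (n : ℕ) :
    dmul X (dpow X n) = dmul (dpow X n) X := by
  induction n with
  | zero => rw [dpow, dmul_done, done_dmul]
  | succ n ih =>
      rw [dpow, ← dmul_assoc_upper hL (isUpper_dpow hL n) hL, ih]

lemma dpow_comm_lower (hL : IsLower X) (n : ℕ) :
    dmul X (dpow X n) = dmul (dpow X n) X := by
  induction n with
  | zero => rw [dpow, dmul_done, done_dmul]
  | succ n ih =>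
      rw [dpow, ← dmul_assoc_lower hL (isLower_dpow hL n) hL, ih]

lemma dcomm_dpow_upper (hL : IsUpper X) (n : ℕ) : dcomm X (dpow X n) = 0 := by
  rw [dcomm, dpow_comm_upper hL, sub_self]

lemma dcomm_dpow_lower (hL : IsLower X) (n : ℕ) : dcomm X (dpow X n) = 0 := by
  rw [dcomm, dpow_comm_lower hL, sub_self]

/-! ### The key computation -/

lemma key_upper (hL : IsUpper X) (hM : IsUpper Y) (hc : dcomm X Y = 0) :
    dcomm X (dneg Y) = dcomm (dpos Y) X := by
  have hB := isBdd_dpos hM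
  have hXY : dmul X Y = dmul Y X := by
    have : dmul X Y - dmul Y X = 0 := hc
    linear_combination (norm := abel) this
  rw [dneg_eq_sub, dcomm,
    dmul_sub (finPair_upper hL hM) (finPair_bdd_right X hB),
    sub_dmul (finPair_upper hM hL) (finPair_bdd_left hB X), hXY, dcomm]
  abel

lemma key_lower (hL : IsLower X) (hM : IsLower Y) (hc : dcomm X Y = 0) :
    dcomm X (dpos Y) = dcomm (dneg Y) X := by
  have hB := isBdd_dneg hM
  have hXY : dmul X Y = dmul Y X := by
    have : dmul X Y - dmul Y X = 0 := hc
    linear_combination (norm := abel) this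
  rw [dpos_eq_sub, dcomm,
    dmul_sub (finPair_lower hL hM) (finPair_bdd_right X hB),
    sub_dmul (finPair_lower hM hL) (finPair_bdd_left hB X), hXY, dcomm]
  abel

end Aux

lemma dpow_succ (X : DOp) (n : ℕ) : dpow X (n + 1) = dmul (dpow X n) X := rfl

lemma half_smul (D : DOp) : (1 / 2 : ℂ) • (D + D) = D := by
  funext k n
  simp only [Pi.smul_apply, Pi.add_apply, smul_eq_mul]
  ring

lemma half_smul_neg (D : DOp) : (1 / 2 : ℂ) • (-(D + D)) = -D := by
  funext k n
  simp only [Pi.smul_apply, Pi.neg_apply, Pi.add_apply, smul_eq_mul]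
  ring
/-- tri-Hamiltonian recursion on the whole algebra `𝔄`. For `L ∈ A⁺`,
`L̄ ∈ A⁻` and `p ≥ 2`,
`P₁(L^p, 0) = P₂(L^{p−1}, 0) = P₃(L^{p−2}, 0) = ([(L^p)₊, L], [(L^p)₊, L̄])` and
`P₁(0, L̄^p) = P₂(0, L̄^{p−1}) = P₃(0, L̄^{p−2}) = ([(L̄^p)₋, L], [(L̄^p)₋, L̄])`,
so the two-dimensional Toda flows admit a tri-Hamiltonian representation. -/
theorem tri_hamiltonian_recursion (L Lb : DOp) (hL : IsUpper L) (hLb : IsLower Lb)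
    (p : ℕ) (hp : 2 ≤ p) :
    P1T (L, Lb) (dpow L p, 0)
        = (dcomm (dpos (dpow L p)) L, dcomm (dpos (dpow L p)) Lb)
    ∧ P2T (L, Lb) (dpow L (p - 1), 0)
        = (dcomm (dpos (dpow L p)) L, dcomm (dpos (dpow L p)) Lb)
    ∧ P3T (L, Lb) (dpow L (p - 2), 0)
        = (dcomm (dpos (dpow L p)) L, dcomm (dpos (dpow L p)) Lb)
    ∧ P1T (L, Lb) (0, dpow Lb p)
        = (dcomm (dneg (dpow Lb p)) L, dcomm (dneg (dpow Lb p)) Lb)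
    ∧ P2T (L, Lb) (0, dpow Lb (p - 1))
        = (dcomm (dneg (dpow Lb p)) L, dcomm (dneg (dpow Lb p)) Lb)
    ∧ P3T (L, Lb) (0, dpow Lb (p - 2))
        = (dcomm (dneg (dpow Lb p)) L, dcomm (dneg (dpow Lb p)) Lb) := by
  obtain ⟨q, hq⟩ : ∃ q, p = q + 2 := ⟨p - 2, by omega⟩
  have e1 : p - 1 = q + 1 := by omega
  have e2 : p - 2 = q := by omega
  set M := dpow L p with hMdef
  set Mb := dpow Lb p with hMbdef
  have hMu : IsUpper M := isUpper_dpow hL p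
  have hMbl : IsLower Mb := isLower_dpow hLb p
  have hcM : dcomm L M = 0 := dcomm_dpow_upper hL p
  have hcMb : dcomm Lb Mb = 0 := dcomm_dpow_lower hLb p
  have hc1 : dcomm L (dpow L (p - 1)) = 0 := dcomm_dpow_upper hL _
  have hc2 : dcomm L (dpow L (p - 2)) = 0 := dcomm_dpow_upper hL _
  have hc1b : dcomm Lb (dpow Lb (p - 1)) = 0 := dcomm_dpow_lower hLb _
  have hc2b : dcomm Lb (dpow Lb (p - 2)) = 0 := dcomm_dpow_lower hLb _
  have hsplit1' : dmul (dpow L (p - 1)) L = M := by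
    rw [e1, hMdef, hq]; rfl
  have hsplit1 : dmul L (dpow L (p - 1)) = M := by
    rw [dpow_comm_upper hL, hsplit1']
  have hsplit2 : dmul (dmul L (dpow L (p - 2))) L = M := by
    rw [e2, dpow_comm_upper hL, hMdef, hq]; rfl
  have hsplit1b' : dmul (dpow Lb (p - 1)) Lb = Mb := by
    rw [e1, hMbdef, hq]; rfl
  have hsplit1b : dmul Lb (dpow Lb (p - 1)) = Mb := by
    rw [dpow_comm_lower hLb, hsplit1b']
  have hsplit2b : dmul (dmul Lb (dpow Lb (p - 2))) Lb = Mb := by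
    rw [e2, dpow_comm_lower hLb, hMbdef, hq]; rfl
  have fLnegM : FinPair L (dneg M) := finPair_upper hL (isUpper_dneg M)
  have fnegML : FinPair (dneg M) L := finPair_upper (isUpper_dneg M) hL
  have fLbposM : FinPair Lb (dpos M) := finPair_bdd_right Lb (isBdd_dpos hMu)
  have fposMLb : FinPair (dpos M) Lb := finPair_bdd_left (isBdd_dpos hMu) Lb
  have fLnegMb : FinPair L (dneg Mb) := finPair_bdd_right L (isBdd_dneg hMbl)
  have fnegMbL : FinPair (dneg Mb) L := finPair_bdd_left (isBdd_dneg hMbl) L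
  have fLbposMb : FinPair Lb (dpos Mb) := finPair_lower hLb (isLower_dpos Mb)
  have fposMbLb : FinPair (dpos Mb) Lb := finPair_lower (isLower_dpos Mb) hLb
  have K1 : dcomm L (dneg M) = dcomm (dpos M) L := key_upper hL hMu hcM
  have K2 : dcomm Lb (dpos Mb) = dcomm (dneg Mb) Lb := key_lower hLb hMbl hcMb
  refine ⟨?_, ?_, ?_, ?_, ?_, ?_⟩
  · -- P1, upper
    simp only [P1T, Prod.mk.injEq]
    constructor
    · rw [dneg_zero, sub_zero, dcomm_zero, add_zero, hcM, truncLe_zero, sub_zero, K1]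
    · rw [dpos_zero, zero_sub, dcomm_neg, dcomm_zero, add_zero, hcM, truncGt_zero,
        sub_zero, dcomm_antisymm (dpos M) Lb]
  · -- P2, upper
    simp only [P2T, Prod.mk.injEq]
    constructor
    · rw [dmul_zero, zero_dmul, add_zero, dneg_zero, sub_zero, dcomm_zero, add_zero,
        hc1, truncLe_zero, dmul_zero, zero_dmul, sub_zero, sub_zero,
        hsplit1, hsplit1', dneg_add, dcomm_add fLnegM fLnegM fnegML fnegML, K1,
        half_smul]
    · rw [dmul_zero, zero_dmul, add_zero, dpos_zero, zero_sub, dcomm_zero, add_zero,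
        hc1, truncGt_zero, dmul_zero, zero_dmul, sub_zero, sub_zero,
        hsplit1, hsplit1', dpos_add, dcomm_neg,
        dcomm_add fLbposM fLbposM fposMLb fposMLb,
        dcomm_antisymm (dpos M) Lb, half_smul_neg]
  · -- P3, upper
    simp only [P3T, Prod.mk.injEq]
    constructor
    · rw [dmul_zero, zero_dmul, sub_zero, hsplit2, dcomm_zero, add_zero, hc2,
        truncLe_zero, dmul_zero, zero_dmul, sub_zero, K1]
    · rw [dmul_zero, zero_dmul, zero_sub, hsplit2, dpos_neg, dcomm_neg, dcomm_zero,
        add_zero, hc2, truncGt_zero, dmul_zero, zero_dmul, sub_zero,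
        dcomm_antisymm (dpos M) Lb]
  · -- P1, lower
    simp only [P1T, Prod.mk.injEq]
    constructor
    · rw [dneg_zero, zero_sub, dcomm_neg, dcomm_zero, zero_add, hcMb, truncLe_zero,
        sub_zero, dcomm_antisymm (dneg Mb) L]
    · rw [dpos_zero, sub_zero, dcomm_zero, zero_add, hcMb, truncGt_zero, sub_zero, K2]
  · -- P2, lower
    simp only [P2T, Prod.mk.injEq]
    constructor
    · rw [dmul_zero, zero_dmul, add_zero, dneg_zero, zero_sub, dcomm_zero, zero_add,
        hc1b, truncLe_zero, dmul_zero, zero_dmul, sub_zero, sub_zero,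
        hsplit1b, hsplit1b', dneg_add, dcomm_neg,
        dcomm_add fLnegMb fLnegMb fnegMbL fnegMbL,
        dcomm_antisymm (dneg Mb) L, half_smul_neg]
    · rw [dmul_zero, zero_dmul, add_zero, dpos_zero, sub_zero, dcomm_zero, zero_add,
        hc1b, truncGt_zero, dmul_zero, zero_dmul, sub_zero, sub_zero,
        hsplit1b, hsplit1b', dpos_add,
        dcomm_add fLbposMb fLbposMb fposMbLb fposMbLb, K2, half_smul]
  · -- P3, lower
    simp only [P3T, Prod.mk.injEq]
    constructor
    · rw [dmul_zero, zero_dmul, zero_sub, hsplit2b, dneg_neg, dcomm_neg, dcomm_zero,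
        zero_add, hc2b, truncLe_zero, dmul_zero, zero_dmul, sub_zero,
        dcomm_antisymm (dneg Mb) L]
    · rw [dmul_zero, zero_dmul, sub_zero, hsplit2b, dcomm_zero, zero_add, hc2b,
        truncGt_zero, dmul_zero, zero_dmul, sub_zero, K2]
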